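/- Let (α_n) be a Markov chain on states {a_1, …, a_m} ⊂ ℝ^r with transition matrix P = I + εQ (Q a generator, ε small enough that P is stochastic), and suppose there exist C > 0, 0 < λ_c < 1 with ‖(I + εQ)^k − 𝟙ν_ε‖ ≤ C λ_c^k for all k, where ν_ε is a stationary probability vector of P. Then for every n, |Σ_{j=n}^∞ E[α_{j+1} − α_j | F_n]| ≤ K ε for a constant K depending only on C, λ_c, Q, and max_j |a_j|, where F_n is the σ-algebra generated by the chain up to time n. -/

import Mathlib

/-! Since `Q` has zero row sums, `Q 𝟙ν = 0`, so with `P = 1 + εQ`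
`P^(k+1) − P^k = εQP^k = εQ(P^k − 𝟙ν)`.
Each drift term is therefore `ε` times a quantity bounded by `C λ_c^k`, and the geometric
series over `k` contributes only the factor `1 / (1 − λ_c)`. -/

open Matrix Finset

theorem Matrix.mul_vecMulVec_one_eq_zero {m n p R : Type*} [Fintype n] [Semiring R]
    {Q : Matrix m n R} (hrow : ∀ i, ∑ j, Q i j = 0) (ν : p → R) :
    Q * vecMulVec (1 : n → R) ν = 0 := by
  have hQ1 : Q *ᵥ 1 = 0 := funext fun i => by simpa [mulVec, dotProduct] using hrow i
  rw [mul_vecMulVec, hQ1, zero_vecMulVec]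

theorem Matrix.one_add_smul_pow_succ_sub_pow {n R : Type*} [Fintype n] [DecidableEq n]
    [CommRing R] {Q : Matrix n n R} (hrow : ∀ i, ∑ j, Q i j = 0) (ε : R) (ν : n → R) (k : ℕ) :
    (1 + ε • Q) ^ (k + 1) - (1 + ε • Q) ^ k = ε • (Q * ((1 + ε • Q) ^ k - vecMulVec 1 ν)) := by
  rw [mul_sub, mul_vecMulVec_one_eq_zero hrow, sub_zero, pow_succ', add_mul, one_mul,
    smul_mul, add_sub_cancel_left]

theorem Matrix.abs_mul_apply_le {m n p : Type*} [Fintype n] (Q : Matrix m n ℝ)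
    (M : Matrix n p ℝ) {B : ℝ} (i : m) (l : p) (hM : ∀ j, |M j l| ≤ B) :
    |(Q * M) i l| ≤ (∑ j, |Q i j|) * B := by
  rw [mul_apply, sum_mul]
  refine (abs_sum_le_sum_abs _ _).trans (sum_le_sum fun j _ => ?_)
  rw [abs_mul]
  exact mul_le_mul_of_nonneg_left (hM j) (abs_nonneg _)

theorem norm_sum_smul_le {ι E : Type*} [Fintype ι] [SeminormedAddCommGroup E]
    [NormedSpace ℝ E] (c : ι → ℝ) (a : ι → E) {B : ℝ} (hc : ∀ l, |c l| ≤ B) :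
    ‖∑ l, c l • a l‖ ≤ B * ∑ l, ‖a l‖ := by
  rw [mul_sum]
  refine norm_sum_le_of_le _ fun l _ => ?_
  rw [norm_smul, Real.norm_eq_abs]
  exact mul_le_mul_of_nonneg_right (hc l) (norm_nonneg _)

theorem stmt18_general (m r : ℕ) (Q : Matrix (Fin m) (Fin m) ℝ)
    (hrow : ∀ i, ∑ j, Q i j = 0)
    (a : Fin m → EuclideanSpace ℝ (Fin r))
    (C lamc : ℝ) (hC : 0 < C) (hl0 : 0 < lamc) (hl1 : lamc < 1) :
    ∃ K : ℝ, ∀ ε : ℝ, 0 < ε →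
      (∀ i j, 0 ≤ ((1 : Matrix (Fin m) (Fin m) ℝ) + ε • Q) i j) →
      ∀ ν : Fin m → ℝ, (∀ i, 0 ≤ ν i) → ∑ i, ν i = 1 →
      Matrix.vecMul ν ((1 : Matrix (Fin m) (Fin m) ℝ) + ε • Q) = ν →
      (∀ (k : ℕ) (i l : Fin m),
        |(((1 : Matrix (Fin m) (Fin m) ℝ) + ε • Q) ^ k) i l - ν l| ≤ C * lamc ^ k) →
      ∀ i : Fin m,
        ‖∑' k : ℕ, ∑ l : Fin m,
          ((((1 : Matrix (Fin m) (Fin m) ℝ) + ε • Q) ^ (k + 1)) i l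
            - (((1 : Matrix (Fin m) (Fin m) ℝ) + ε • Q) ^ k) i l) • a l‖ ≤ K * ε := by
  set QS := ∑ i, ∑ j, |Q i j|
  set A := ∑ l, ‖a l‖
  refine ⟨C * QS * A / (1 - lamc), fun ε hε _ ν _ _ _ herg i => ?_⟩
  set P := (1 : Matrix (Fin m) (Fin m) ℝ) + ε • Q
  have hrow_le : ∑ j, |Q i j| ≤ QS :=
    single_le_sum (f := fun i => ∑ j, |Q i j|)
      (fun _ _ => sum_nonneg fun _ _ => abs_nonneg _) (mem_univ i)
  have hstep : ∀ k l, |(P ^ (k + 1)) i l - (P ^ k) i l| ≤ ε * QS * C * lamc ^ k := by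
    intro k l
    have hdev :
        |(Q * (P ^ k - vecMulVec 1 ν) : Matrix (Fin m) (Fin m) ℝ) i l| ≤ QS * (C * lamc ^ k) :=
      (abs_mul_apply_le _ _ i l fun j => by simpa [vecMulVec_apply] using herg k j l).trans
        (mul_le_mul_of_nonneg_right hrow_le (by positivity))
    rw [← Matrix.sub_apply, one_add_smul_pow_succ_sub_pow hrow ε ν k, Matrix.smul_apply,
      smul_eq_mul, abs_mul, abs_of_pos hε]
    exact (mul_le_mul_of_nonneg_left hdev hε.le).trans_eq (by ring)
  calc _ ≤ ε * QS * C * A * (1 - lamc)⁻¹ :=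
        tsum_of_norm_bounded ((hasSum_geometric_of_lt_one hl0.le hl1).mul_left _) fun k =>
          (norm_sum_smul_le _ a (hstep k)).trans_eq (by ring)
    _ = C * QS * A / (1 - lamc) * ε := by ring

/-- Under geometric ergodicity of `P = I + εQ` (entrywise: `|(P^k)_{il} − ν_l| ≤ C λ_c^k`),
the tail sum of conditional one-step drifts `Σ_{j≥n} E[α_{j+1} − α_j | α_n = a_i]
= Σ_{k≥0} Σ_l ((P^{k+1})_{il} − (P^k)_{il}) a_l` is bounded in norm by `K ε`, where `K`
depends only on `C`, `λ_c`, `Q`, and `max_j |a_j|`. -/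
theorem stmt18 (m r : ℕ) (Q : Matrix (Fin m) (Fin m) ℝ)
    (hoff : ∀ i j, i ≠ j → 0 ≤ Q i j)
    (hrow : ∀ i, ∑ j, Q i j = 0)
    (a : Fin m → EuclideanSpace ℝ (Fin r))
    (C lamc : ℝ) (hC : 0 < C) (hl0 : 0 < lamc) (hl1 : lamc < 1) :
    ∃ K : ℝ, ∀ ε : ℝ, 0 < ε →
      (∀ i j, 0 ≤ ((1 : Matrix (Fin m) (Fin m) ℝ) + ε • Q) i j) →
      ∀ ν : Fin m → ℝ, (∀ i, 0 ≤ ν i) → ∑ i, ν i = 1 →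
      Matrix.vecMul ν ((1 : Matrix (Fin m) (Fin m) ℝ) + ε • Q) = ν →
      (∀ (k : ℕ) (i l : Fin m),
        |(((1 : Matrix (Fin m) (Fin m) ℝ) + ε • Q) ^ k) i l - ν l| ≤ C * lamc ^ k) →
      ∀ i : Fin m,
        ‖∑' k : ℕ, ∑ l : Fin m,
          ((((1 : Matrix (Fin m) (Fin m) ℝ) + ε • Q) ^ (k + 1)) i l
            - (((1 : Matrix (Fin m) (Fin m) ℝ) + ε • Q) ^ k) i l) • a l‖ ≤ K * ε :=
  stmt18_general m r Q hrow a C lamc hC hl0 hl1
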